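/- Suppose ρ is normalized Lipschitz, W, W̃ : I² → ℝ are measurable with |W| ≤ 1 and |W̃| ≤ 1 a.e., and the filter coefficients (h_{fgk}^{(ℓ)}) satisfy |h_{fgk}^{(ℓ)}| ≤ h̄ for all f,g ∈ {1,…,F}, k ∈ {0,…,K−1}, ℓ ∈ {1,…,L}. Then for any X, X̃ ∈ L^∞(I; ℝ^F), ‖Φ(W̃; X̃; h) − Φ(W; X; h)‖_{L²(I;ℝ^F)} ≤ (F K h̄)^L ( ‖X̃ − X‖_{L²(I;ℝ^F)} + L K ‖T_{W̃} − T_W‖_{L²(I)→L²(I)} ‖X‖_{L²(I;ℝ^F)} ). -/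

import Mathlib

open MeasureTheory Filter Set
open scoped ENNReal NNReal

noncomputable section

/-- Lebesgue measure restricted to the unit interval `I = [0,1]`. -/
def μI : Measure ℝ := volume.restrict (Set.Icc (0:ℝ) 1)

/-- Lebesgue measure restricted to the unit square `I² = [0,1]²`. -/
def μI2 : Measure (ℝ × ℝ) := volume.restrict ((Set.Icc (0:ℝ) 1) ×ˢ (Set.Icc (0:ℝ) 1))

/-- The graphon integral operator `(T_W x)(v) = ∫_I W(u,v) x(u) du`. -/
def graphonOp (W : ℝ → ℝ → ℝ) (x : ℝ → ℝ) : ℝ → ℝ :=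
  fun v => ∫ u in Set.Icc (0:ℝ) 1, W u v * x u

/-- `k`-fold composition `T_W^k` (identity for `k = 0`). -/
def graphonIter (W : ℝ → ℝ → ℝ) (k : ℕ) (x : ℝ → ℝ) : ℝ → ℝ :=
  (graphonOp W)^[k] x

/-- `ρ` is normalized Lipschitz: `|ρ x − ρ y| ≤ |x − y|` and `ρ 0 = 0`. -/
def NormalizedLipschitz (ρ : ℝ → ℝ) : Prop :=
  (∀ x y : ℝ, |ρ x - ρ y| ≤ |x - y|) ∧ ρ 0 = 0

/-- One layer of a graphon neural network. -/
def gnnLayer (F K : ℕ) (W : ℝ → ℝ → ℝ) (ρ : ℝ → ℝ)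
    (h : Fin F → Fin F → Fin K → ℝ) (X : Fin F → ℝ → ℝ) : Fin F → ℝ → ℝ :=
  fun f u => ρ (∑ g : Fin F, ∑ k : Fin K, h f g k * graphonIter W (k : ℕ) (X g) u)

/-- The `L`-layer graphon neural network `Φ(W; X; h)`. -/
def gnn (F K L : ℕ) (W : ℝ → ℝ → ℝ) (ρ : ℝ → ℝ)
    (h : Fin L → Fin F → Fin F → Fin K → ℝ) (X : Fin F → ℝ → ℝ) : Fin F → ℝ → ℝ :=
  (List.ofFn h).foldl (fun Y hl => gnnLayer F K W ρ hl Y) X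

/-- The mixed norm `‖X‖_{L^p(I;ℝ^F)} = (∑_f ‖X_f‖_{L^p(I)}²)^{1/2}`. -/
def vecLpNorm (F : ℕ) (p : ℝ≥0∞) (X : Fin F → ℝ → ℝ) : ℝ :=
  Real.sqrt (∑ f : Fin F, ((eLpNorm (X f) p μI).toReal) ^ 2)

/-- `X : ℝ → L^∞(I;ℝ^F)` is, on `[0,T]`, a continuously differentiable solution of the
Graphon-NDE `dX/dt(t) = Φ(W; X(t); H(t))`, `X(0) = Z`, in the Banach space `L^∞(I;ℝ^F)`. -/
def IsGNDESolution (F K L : ℕ) (T : ℝ) (W : ℝ → ℝ → ℝ) (ρ : ℝ → ℝ)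
    (H : ℝ → Fin L → Fin F → Fin F → Fin K → ℝ) (Z : Fin F → ℝ → ℝ)
    (X : ℝ → Fin F → Lp ℝ ⊤ μI) : Prop :=
  (∀ f, (X 0 f : ℝ → ℝ) =ᵐ[μI] Z f) ∧
  ∃ X' : ℝ → Fin F → Lp ℝ ⊤ μI,
    ContinuousOn X' (Set.Icc 0 T) ∧
    ∀ t ∈ Set.Icc (0:ℝ) T,
      HasDerivWithinAt X (X' t) (Set.Icc 0 T) t ∧
      ∀ f, (X' t f : ℝ → ℝ) =ᵐ[μI]
        gnn F K L W ρ (H t) (fun g => (X t g : ℝ → ℝ)) f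

/-- Operator norm (from `L²(I)` to `L²(I)`) of the difference `T_W − T_{W'}`. -/
def graphonOpNormSub (W W' : ℝ → ℝ → ℝ) : ℝ :=
  ⨆ x : {x : ℝ → ℝ // MemLp x 2 μI ∧ eLpNorm x 2 μI ≤ 1},
    (eLpNorm (fun v => graphonOp W x v - graphonOp W' x v) 2 μI).toReal

/-- Left endpoint `u_i = (i−1)/n` of the cell `I_i` containing `u`. -/
def stepPt (n : ℕ) (u : ℝ) : ℝ := (⌊(n : ℝ) * u⌋ : ℝ) / n

/-- Sampled step kernel: `Wₙ(u,v) = W(u_i,u_j)` for `(u,v) ∈ I_i × I_j`. -/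
def sampKernel (W : ℝ → ℝ → ℝ) (n : ℕ) : ℝ → ℝ → ℝ :=
  fun u v => W (stepPt n u) (stepPt n v)

/-- Sampled step datum: `Zₙ(u) = Z(u_i)` for `u ∈ I_i`. -/
def sampDatum (F : ℕ) (Z : Fin F → ℝ → ℝ) (n : ℕ) : Fin F → ℝ → ℝ :=
  fun f u => Z f (stepPt n u)

/-- Support `W⁺ = {(u,v) ∈ I² : W(u,v) = 1}`. -/
def supportSet (W : ℝ → ℝ → ℝ) : Set (ℝ × ℝ) :=
  {p : ℝ × ℝ | p.1 ∈ Set.Icc (0:ℝ) 1 ∧ p.2 ∈ Set.Icc (0:ℝ) 1 ∧ W p.1 p.2 = 1}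

/-- The cell `I_i = [u_i, u_i + 1/n)` containing `u`. -/
def cell (n : ℕ) (u : ℝ) : Set ℝ := Set.Ico (stepPt n u) (stepPt n u + 1 / n)

open scoped Classical in
/-- Cell-intersection step kernel: `Wₙ = 1` on `I_i × I_j` iff `(I_i × I_j) ∩ W⁺ ≠ ∅`. -/
def interKernel (W : ℝ → ℝ → ℝ) (n : ℕ) : ℝ → ℝ → ℝ :=
  fun u v => if ((cell n u ×ˢ cell n v) ∩ supportSet W).Nonempty then 1 else 0

/-- Cell-average step datum: `Zₙ(u) = n ∫_{I_i} Z(v) dv` for `u ∈ I_i`. -/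
def cellAvg (F : ℕ) (Z : Fin F → ℝ → ℝ) (n : ℕ) : Fin F → ℝ → ℝ :=
  fun f u => (n : ℝ) * ∫ v in cell n u, Z f v

/-- Number of closed `δ`-mesh squares `[iδ,(i+1)δ] × [jδ,(j+1)δ]`, `i,j ∈ ℤ`, meeting `Ω`. -/
def meshCount (δ : ℝ) (Ω : Set (ℝ × ℝ)) : ℕ :=
  Set.ncard {p : ℤ × ℤ |
    ((Set.Icc ((p.1 : ℝ) * δ) (((p.1 : ℝ) + 1) * δ) ×ˢ
      Set.Icc ((p.2 : ℝ) * δ) (((p.2 : ℝ) + 1) * δ)) ∩ Ω).Nonempty}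

/-- Upper box-counting dimension `limsup_{δ→0⁺} log N_δ(Ω) / (−log δ)`. -/
def upperBoxDim (Ω : Set (ℝ × ℝ)) : ℝ :=
  Filter.limsup (fun δ : ℝ => Real.log (meshCount δ Ω) / (-Real.log δ))
    (nhdsWithin 0 (Set.Ioi 0))

end

/-!
On the probability space `I`, a kernel with `|W| ≤ 1` gives `‖T_W x‖_∞ ≤ ‖x‖_1 ≤ ‖x‖_2`, so
`T_W` is a contraction of `L²(I)`. Writing
`T̃^{k+1} x̃ - T^{k+1} x = T̃ (T̃^k x̃ - T^k x) + (T̃ - T) T^k x` gives `‖T̃^k x̃ - T^k x‖ ≤ ‖x̃ - x‖ + k ‖T̃ - T‖ ‖x‖`. Since `ρ` is 1-Lipschitz with `ρ 0 = 0`, a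
layer with `F K` filter taps bounded by `h̄` then moves by at most
`F K h̄ (‖X̃ - X‖ + K ‖T̃ - T‖ ‖X‖)` and scales norms by at most `F K h̄` (the factor `F` is
`√F` from summing over input features times `√F` from the mixed norm over output features).
Iterating over the `L` layers produces `(F K h̄)^L` and `L` copies of the operator term.
-/

instance : IsProbabilityMeasure μI :=
  ⟨by rw [μI, Measure.restrict_apply_univ, Real.volume_Icc]; norm_num⟩

noncomputable def l2Norm (x : ℝ → ℝ) : ℝ := (eLpNorm x 2 μI).toReal

lemma vecLpNorm_two_eq (F : ℕ) (X : Fin F → ℝ → ℝ) :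
    vecLpNorm F 2 X = √(∑ f, l2Norm (X f) ^ 2) := rfl

lemma vecLpNorm_zero (F : ℕ) (p : ℝ≥0∞) : vecLpNorm F p 0 = 0 := by
  simp [vecLpNorm]

lemma l2Norm_nonneg (x : ℝ → ℝ) : 0 ≤ l2Norm x := ENNReal.toReal_nonneg

lemma l2Norm_congr_ae {x y : ℝ → ℝ} (h : x =ᵐ[μI] y) : l2Norm x = l2Norm y := by
  rw [l2Norm, l2Norm, eLpNorm_congr_ae h]

lemma l2Norm_const_mul (c : ℝ) (x : ℝ → ℝ) : l2Norm (fun u => c * x u) = |c| * l2Norm x := by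
  rw [l2Norm, l2Norm, show (fun u => c * x u) = c • x from rfl, eLpNorm_const_smul,
    ENNReal.toReal_mul, toReal_enorm, Real.norm_eq_abs]

lemma l2Norm_le_of_abs_le {x y : ℝ → ℝ} (h : ∀ u, |x u| ≤ |y u|) (hy : MemLp y 2 μI) :
    l2Norm x ≤ l2Norm y :=
  ENNReal.toReal_mono hy.eLpNorm_ne_top
    (eLpNorm_mono fun u => by simpa only [Real.norm_eq_abs] using h u)

lemma l2Norm_add_le {x y : ℝ → ℝ} (hx : MemLp x 2 μI) (hy : MemLp y 2 μI) :
    l2Norm (fun u => x u + y u) ≤ l2Norm x + l2Norm y := by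
  rw [l2Norm, l2Norm, l2Norm, ← ENNReal.toReal_add hx.eLpNorm_ne_top hy.eLpNorm_ne_top]
  exact ENNReal.toReal_mono (by finiteness [hx.eLpNorm_ne_top, hy.eLpNorm_ne_top])
    (eLpNorm_add_le hx.1 hy.1 one_le_two)

lemma l2Norm_sum_le {ι : Type*} (s : Finset ι) {x : ι → ℝ → ℝ}
    (hx : ∀ i ∈ s, MemLp (x i) 2 μI) :
    l2Norm (fun u => ∑ i ∈ s, x i u) ≤ ∑ i ∈ s, l2Norm (x i) := by
  unfold l2Norm
  rw [← ENNReal.toReal_sum fun i hi => (hx i hi).eLpNorm_ne_top, ← Finset.sum_fn]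
  exact ENNReal.toReal_mono (ENNReal.sum_ne_top.2 fun i hi => (hx i hi).eLpNorm_ne_top)
    (eLpNorm_sum_le (fun i hi => (hx i hi).1) one_le_two)

lemma sum_l2Norm_le {F : ℕ} (X : Fin F → ℝ → ℝ) :
    ∑ f, l2Norm (X f) ≤ √F * vecLpNorm F 2 X := by
  rw [vecLpNorm_two_eq, ← Real.sqrt_mul (Nat.cast_nonneg F)]
  refine Real.le_sqrt_of_sq_le ?_
  simpa using sq_sum_le_card_mul_sum_sq (s := Finset.univ) (f := fun f => l2Norm (X f))

lemma vecLpNorm_le_of_forall_le {F : ℕ} {X : Fin F → ℝ → ℝ} {B : ℝ} (hB : 0 ≤ B)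
    (h : ∀ f, l2Norm (X f) ≤ B) : vecLpNorm F 2 X ≤ √F * B := by
  rw [vecLpNorm_two_eq, ← Real.sqrt_sq hB, ← Real.sqrt_mul (Nat.cast_nonneg F)]
  refine Real.sqrt_le_sqrt ?_
  simpa using Finset.sum_le_sum (s := Finset.univ) fun f _ =>
    pow_le_pow_left₀ (l2Norm_nonneg _) (h f) 2

section GraphonOperator

variable {W Wt : ℝ → ℝ → ℝ}

lemma ae_ae_abs_le_one (hWb : ∀ᵐ q ∂μI2, |Function.uncurry W q| ≤ 1) :
    ∀ᵐ v ∂μI, ∀ᵐ u ∂μI, |W u v| ≤ 1 := by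
  rw [show μI2 = μI.prod μI by rw [μI2, μI, Measure.volume_eq_prod, Measure.prod_restrict]]
    at hWb
  exact Measure.ae_ae_of_ae_prod (Measure.measurePreserving_swap.quasiMeasurePreserving.ae hWb)

lemma eLpNorm_top_graphonOp_le (hWb : ∀ᵐ q ∂μI2, |Function.uncurry W q| ≤ 1) (x : ℝ → ℝ) :
    eLpNorm (graphonOp W x) ⊤ μI ≤ eLpNorm x 1 μI := by
  rw [eLpNorm_exponent_top, eLpNorm_one_eq_lintegral_enorm]
  refine eLpNormEssSup_le_of_ae_enorm_bound ?_
  filter_upwards [ae_ae_abs_le_one hWb] with v hv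
  refine (enorm_integral_le_lintegral_enorm _).trans (lintegral_mono_ae ?_)
  filter_upwards [hv] with u hu
  rw [enorm_mul]
  exact mul_le_of_le_one_left' (by simpa [Real.enorm_eq_ofReal_abs] using hu)

lemma aestronglyMeasurable_graphonOp (hWm : Measurable (Function.uncurry W)) {x : ℝ → ℝ}
    (hx : AEStronglyMeasurable x μI) : AEStronglyMeasurable (graphonOp W x) μI :=
  ((hWm.comp measurable_swap).aestronglyMeasurable.mul
    (hx.comp_snd (μ := μI))).integral_prod_right'

lemma memLp_graphonOp (hWm : Measurable (Function.uncurry W))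
    (hWb : ∀ᵐ q ∂μI2, |Function.uncurry W q| ≤ 1) {p : ℝ≥0∞} (hp : 1 ≤ p) {x : ℝ → ℝ}
    (hx : MemLp x p μI) : MemLp (graphonOp W x) p μI := by
  have hTx := aestronglyMeasurable_graphonOp hWm hx.1
  exact ⟨hTx, (eLpNorm_le_eLpNorm_of_exponent_le le_top hTx).trans_lt
    ((eLpNorm_top_graphonOp_le hWb x).trans_lt (hx.mono_exponent hp).2)⟩

lemma eLpNorm_graphonOp_le (hWm : Measurable (Function.uncurry W))
    (hWb : ∀ᵐ q ∂μI2, |Function.uncurry W q| ≤ 1) {p : ℝ≥0∞} (hp : 1 ≤ p) {x : ℝ → ℝ}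
    (hx : AEStronglyMeasurable x μI) : eLpNorm (graphonOp W x) p μI ≤ eLpNorm x p μI :=
  calc eLpNorm (graphonOp W x) p μI
      ≤ eLpNorm (graphonOp W x) ⊤ μI :=
        eLpNorm_le_eLpNorm_of_exponent_le le_top (aestronglyMeasurable_graphonOp hWm hx)
    _ ≤ eLpNorm x 1 μI := eLpNorm_top_graphonOp_le hWb x
    _ ≤ eLpNorm x p μI := eLpNorm_le_eLpNorm_of_exponent_le hp hx

lemma l2Norm_graphonOp_le (hWm : Measurable (Function.uncurry W))
    (hWb : ∀ᵐ q ∂μI2, |Function.uncurry W q| ≤ 1) {x : ℝ → ℝ} (hx : MemLp x 2 μI) :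
    l2Norm (graphonOp W x) ≤ l2Norm x :=
  ENNReal.toReal_mono hx.eLpNorm_ne_top (eLpNorm_graphonOp_le hWm hWb one_le_two hx.1)

lemma graphonOp_const_mul (c : ℝ) (x : ℝ → ℝ) :
    graphonOp W (fun u => c * x u) = fun v => c * graphonOp W x v := by
  funext v
  simp only [graphonOp, ← integral_const_mul, mul_left_comm c]

lemma graphonOp_sub_ae (hWm : Measurable (Function.uncurry W))
    (hWb : ∀ᵐ q ∂μI2, |Function.uncurry W q| ≤ 1) {x y : ℝ → ℝ}
    (hx : Integrable x μI) (hy : Integrable y μI) :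
    graphonOp W (fun u => x u - y u) =ᵐ[μI] fun v => graphonOp W x v - graphonOp W y v := by
  filter_upwards [ae_ae_abs_le_one hWb] with v hv
  have hWv : AEStronglyMeasurable (fun u => W u v) μI :=
    (hWm.comp measurable_prodMk_right).aestronglyMeasurable
  have hbound : ∀ᵐ u ∂μI, ‖W u v‖ ≤ 1 := by simpa only [Real.norm_eq_abs] using hv
  simp only [graphonOp, mul_sub]
  exact integral_sub (hx.bdd_mul hWv hbound) (hy.bdd_mul hWv hbound)

lemma eLpNorm_graphonOp_sub_le (hWm : Measurable (Function.uncurry W))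
    (hWtm : Measurable (Function.uncurry Wt))
    (hWb : ∀ᵐ q ∂μI2, |Function.uncurry W q| ≤ 1)
    (hWtb : ∀ᵐ q ∂μI2, |Function.uncurry Wt q| ≤ 1) {x : ℝ → ℝ}
    (hx : AEStronglyMeasurable x μI) :
    eLpNorm (fun v => graphonOp Wt x v - graphonOp W x v) 2 μI ≤ 2 * eLpNorm x 2 μI :=
  (eLpNorm_sub_le (aestronglyMeasurable_graphonOp hWtm hx)
    (aestronglyMeasurable_graphonOp hWm hx) one_le_two).trans
    (two_mul (eLpNorm x 2 μI) ▸ add_le_add (eLpNorm_graphonOp_le hWtm hWtb one_le_two hx)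
      (eLpNorm_graphonOp_le hWm hWb one_le_two hx))

lemma graphonOpNormSub_nonneg (Wt W : ℝ → ℝ → ℝ) : 0 ≤ graphonOpNormSub Wt W :=
  Real.iSup_nonneg fun _ => ENNReal.toReal_nonneg

lemma l2Norm_graphonOp_sub_le (hWm : Measurable (Function.uncurry W))
    (hWtm : Measurable (Function.uncurry Wt))
    (hWb : ∀ᵐ q ∂μI2, |Function.uncurry W q| ≤ 1)
    (hWtb : ∀ᵐ q ∂μI2, |Function.uncurry Wt q| ≤ 1) {x : ℝ → ℝ} (hx : MemLp x 2 μI) :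
    l2Norm (fun v => graphonOp Wt x v - graphonOp W x v) ≤ graphonOpNormSub Wt W * l2Norm x := by
  have hle_two := fun {y : ℝ → ℝ} (hy : AEStronglyMeasurable y μI) =>
    eLpNorm_graphonOp_sub_le hWm hWtm hWb hWtb hy
  rcases (l2Norm_nonneg x).eq_or_lt with hx0 | hxpos
  · have : eLpNorm x 2 μI = 0 := by
      simpa [hx.eLpNorm_ne_top] using (ENNReal.toReal_eq_zero_iff _).1 hx0.symm
    have hdiff : eLpNorm (fun v => graphonOp Wt x v - graphonOp W x v) 2 μI = 0 := by
      simpa [this] using hle_two hx.1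
    rw [← hx0, mul_zero, l2Norm, hdiff, ENNReal.toReal_zero]
  set c := l2Norm x
  -- `c⁻¹ x` lies in the unit ball over which `graphonOpNormSub` is the supremum
  have hy : MemLp (fun u => c⁻¹ * x u) 2 μI := hx.const_mul c⁻¹
  have hy1 : eLpNorm (fun u => c⁻¹ * x u) 2 μI ≤ 1 := by
    rw [← ENNReal.ofReal_toReal hy.eLpNorm_ne_top]
    change ENNReal.ofReal (l2Norm _) ≤ 1
    rw [l2Norm_const_mul, abs_of_pos (inv_pos.2 hxpos), inv_mul_cancel₀ hxpos.ne',
      ENNReal.ofReal_one]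
  have hbdd : BddAbove (Set.range fun y : {y : ℝ → ℝ // MemLp y 2 μI ∧ eLpNorm y 2 μI ≤ 1} =>
      (eLpNorm (fun v => graphonOp Wt y v - graphonOp W y v) 2 μI).toReal) := by
    refine ⟨2, ?_⟩
    rintro _ ⟨⟨y, hy, hy1⟩, rfl⟩
    refine ENNReal.toReal_le_of_le_ofReal zero_le_two ((hle_two hy.1).trans ?_)
    calc 2 * eLpNorm y 2 μI ≤ 2 * 1 := by gcongr
      _ = ENNReal.ofReal 2 := by norm_num
  have hsup := le_ciSup hbdd ⟨_, hy, hy1⟩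
  change l2Norm (fun v => graphonOp Wt _ v - graphonOp W _ v) ≤ graphonOpNormSub Wt W at hsup
  simp only [graphonOp_const_mul, ← mul_sub, l2Norm_const_mul, abs_of_pos (inv_pos.2 hxpos)]
    at hsup
  rwa [inv_mul_le_iff₀ hxpos, mul_comm] at hsup

end GraphonOperator

section GraphonIterates

variable {W Wt : ℝ → ℝ → ℝ}

lemma graphonIter_succ (W : ℝ → ℝ → ℝ) (k : ℕ) (x : ℝ → ℝ) :
    graphonIter W (k + 1) x = graphonOp W (graphonIter W k x) :=
  Function.iterate_succ_apply' _ _ _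

lemma graphonIter_zero_right (W : ℝ → ℝ → ℝ) (k : ℕ) : graphonIter W k 0 = 0 :=
  Function.iterate_fixed (by funext v; simp [graphonOp]) k

lemma memLp_graphonIter (hWm : Measurable (Function.uncurry W))
    (hWb : ∀ᵐ q ∂μI2, |Function.uncurry W q| ≤ 1) {p : ℝ≥0∞} (hp : 1 ≤ p) {x : ℝ → ℝ}
    (hx : MemLp x p μI) (k : ℕ) : MemLp (graphonIter W k x) p μI := by
  induction k with
  | zero => exact hx
  | succ k ih => exact graphonIter_succ W k x ▸ memLp_graphonOp hWm hWb hp ih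

lemma l2Norm_graphonIter_le (hWm : Measurable (Function.uncurry W))
    (hWb : ∀ᵐ q ∂μI2, |Function.uncurry W q| ≤ 1) {x : ℝ → ℝ} (hx : MemLp x 2 μI) (k : ℕ) :
    l2Norm (graphonIter W k x) ≤ l2Norm x := by
  induction k with
  | zero => exact le_rfl
  | succ k ih =>
    rw [graphonIter_succ]
    exact (l2Norm_graphonOp_le hWm hWb (memLp_graphonIter hWm hWb one_le_two hx k)).trans ih

lemma l2Norm_graphonIter_sub_le (hWm : Measurable (Function.uncurry W))
    (hWtm : Measurable (Function.uncurry Wt))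
    (hWb : ∀ᵐ q ∂μI2, |Function.uncurry W q| ≤ 1)
    (hWtb : ∀ᵐ q ∂μI2, |Function.uncurry Wt q| ≤ 1) {x xt : ℝ → ℝ}
    (hx : MemLp x 2 μI) (hxt : MemLp xt 2 μI) (k : ℕ) :
    l2Norm (fun u => graphonIter Wt k xt u - graphonIter W k x u)
      ≤ l2Norm (fun u => xt u - x u) + k * graphonOpNormSub Wt W * l2Norm x := by
  induction k with
  | zero => simp [graphonIter]
  | succ k ih =>
    set a := graphonIter Wt k xt
    set b := graphonIter W k x
    have ha : MemLp a 2 μI := memLp_graphonIter hWtm hWtb one_le_two hxt k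
    have hb : MemLp b 2 μI := memLp_graphonIter hWm hWb one_le_two hx k
    have hsplit : (fun u => graphonOp Wt a u - graphonOp W b u)
        =ᵐ[μI] fun u => graphonOp Wt (fun u => a u - b u) u
          + (graphonOp Wt b u - graphonOp W b u) := by
      filter_upwards [graphonOp_sub_ae hWtm hWtb (ha.integrable one_le_two)
        (hb.integrable one_le_two)] with u hu
      rw [hu]
      ring
    rw [graphonIter_succ, graphonIter_succ, l2Norm_congr_ae hsplit]
    calc _ ≤ l2Norm (graphonOp Wt (fun u => a u - b u))
            + l2Norm (fun u => graphonOp Wt b u - graphonOp W b u) :=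
          l2Norm_add_le (memLp_graphonOp hWtm hWtb one_le_two (ha.sub hb))
            ((memLp_graphonOp hWtm hWtb one_le_two hb).sub (memLp_graphonOp hWm hWb one_le_two hb))
      _ ≤ l2Norm (fun u => a u - b u) + graphonOpNormSub Wt W * l2Norm x :=
          add_le_add (l2Norm_graphonOp_le hWtm hWtb (ha.sub hb))
            ((l2Norm_graphonOp_sub_le hWm hWtm hWb hWtb hb).trans
              (mul_le_mul_of_nonneg_left (l2Norm_graphonIter_le hWm hWb hx k)
                (graphonOpNormSub_nonneg Wt W)))
      _ ≤ _ := by push_cast; linarith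

end GraphonIterates

lemma NormalizedLipschitz.lipschitzWith {ρ : ℝ → ℝ} (hρ : NormalizedLipschitz ρ) :
    LipschitzWith 1 ρ :=
  LipschitzWith.of_dist_le_mul fun x y => by simpa [Real.dist_eq] using hρ.1 x y

section Layer

variable {F K : ℕ} {W Wt : ℝ → ℝ → ℝ} {ρ : ℝ → ℝ} {hl : Fin F → Fin F → Fin K → ℝ}
  {hbar : ℝ}

lemma gnnLayer_zero_right (hρ : NormalizedLipschitz ρ) : gnnLayer F K W ρ hl 0 = 0 := by
  funext f u
  simp [gnnLayer, graphonIter_zero_right, hρ.2]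

lemma memLp_gnnLayer (hWm : Measurable (Function.uncurry W))
    (hWb : ∀ᵐ q ∂μI2, |Function.uncurry W q| ≤ 1) (hρ : NormalizedLipschitz ρ)
    {p : ℝ≥0∞} (hp : 1 ≤ p) {X : Fin F → ℝ → ℝ} (hX : ∀ g, MemLp (X g) p μI) (f : Fin F) :
    MemLp (gnnLayer F K W ρ hl X f) p μI :=
  hρ.lipschitzWith.comp_memLp hρ.2 <| memLp_finsetSum _ fun g _ => memLp_finsetSum _
    fun k _ => (memLp_graphonIter hWm hWb hp (hX g) k).const_mul _

lemma l2Norm_gnnLayer_sub_le (hWm : Measurable (Function.uncurry W))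
    (hWtm : Measurable (Function.uncurry Wt))
    (hWb : ∀ᵐ q ∂μI2, |Function.uncurry W q| ≤ 1)
    (hWtb : ∀ᵐ q ∂μI2, |Function.uncurry Wt q| ≤ 1) (hρ : NormalizedLipschitz ρ)
    (hhl : ∀ f g k, |hl f g k| ≤ hbar) (hbar0 : 0 ≤ hbar) {X Xt : Fin F → ℝ → ℝ}
    (hX : ∀ g, MemLp (X g) 2 μI) (hXt : ∀ g, MemLp (Xt g) 2 μI) (f : Fin F) :
    l2Norm (fun u => gnnLayer F K Wt ρ hl Xt f u - gnnLayer F K W ρ hl X f u)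
      ≤ K * hbar * (∑ g, l2Norm (fun u => Xt g u - X g u)
        + K * graphonOpNormSub Wt W * ∑ g, l2Norm (X g)) := by
  set Δ := graphonOpNormSub Wt W
  have hdiff : ∀ g (k : Fin K), MemLp (fun u => hl f g k *
      (graphonIter Wt k (Xt g) u - graphonIter W k (X g) u)) 2 μI := fun g k =>
    ((memLp_graphonIter hWtm hWtb one_le_two (hXt g) k).sub
      (memLp_graphonIter hWm hWb one_le_two (hX g) k)).const_mul _
  calc _ ≤ l2Norm (fun u => ∑ g, ∑ k : Fin K, hl f g k *
          (graphonIter Wt k (Xt g) u - graphonIter W k (X g) u)) := by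
        refine l2Norm_le_of_abs_le (fun u => ?_)
          (memLp_finsetSum _ fun g _ => memLp_finsetSum _ fun k _ => hdiff g k)
        simp only [gnnLayer, mul_sub, Finset.sum_sub_distrib]
        exact hρ.1 _ _
    _ ≤ ∑ g, ∑ k : Fin K, |hl f g k| *
          l2Norm (fun u => graphonIter Wt k (Xt g) u - graphonIter W k (X g) u) := by
        refine (l2Norm_sum_le _ fun g _ => memLp_finsetSum _ fun k _ => hdiff g k).trans
          (Finset.sum_le_sum fun g _ => (l2Norm_sum_le _ fun k _ => hdiff g k).trans_eq ?_)
        simp only [l2Norm_const_mul]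
    _ ≤ ∑ g, ∑ _k : Fin K, hbar * (l2Norm (fun u => Xt g u - X g u) + K * Δ * l2Norm (X g)) := by
        refine Finset.sum_le_sum fun g _ => Finset.sum_le_sum fun k _ =>
          mul_le_mul (hhl f g k) ?_ (l2Norm_nonneg _) hbar0
        refine (l2Norm_graphonIter_sub_le hWm hWtm hWb hWtb (hX g) (hXt g) k).trans ?_
        gcongr
        · exact l2Norm_nonneg _
        · exact graphonOpNormSub_nonneg Wt W
        · exact_mod_cast k.2.le
    _ = _ := by
        simp only [Finset.sum_const, Finset.card_univ, Fintype.card_fin, nsmul_eq_mul, mul_add,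
          Finset.mul_sum, ← Finset.sum_add_distrib]
        exact Finset.sum_congr rfl fun _ _ => by ring

lemma vecLpNorm_gnnLayer_sub_le (hWm : Measurable (Function.uncurry W))
    (hWtm : Measurable (Function.uncurry Wt))
    (hWb : ∀ᵐ q ∂μI2, |Function.uncurry W q| ≤ 1)
    (hWtb : ∀ᵐ q ∂μI2, |Function.uncurry Wt q| ≤ 1) (hρ : NormalizedLipschitz ρ)
    (hhl : ∀ f g k, |hl f g k| ≤ hbar) (hbar0 : 0 ≤ hbar) {X Xt : Fin F → ℝ → ℝ}
    (hX : ∀ g, MemLp (X g) 2 μI) (hXt : ∀ g, MemLp (Xt g) 2 μI) :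
    vecLpNorm F 2 (fun f u => gnnLayer F K Wt ρ hl Xt f u - gnnLayer F K W ρ hl X f u)
      ≤ F * K * hbar * (vecLpNorm F 2 (fun f u => Xt f u - X f u)
        + K * graphonOpNormSub Wt W * vecLpNorm F 2 X) := by
  set Δ := graphonOpNormSub Wt W
  have hΔ : 0 ≤ Δ := graphonOpNormSub_nonneg Wt W
  have hB : 0 ≤ K * hbar * (√F * vecLpNorm F 2 (fun f u => Xt f u - X f u)
      + K * Δ * (√F * vecLpNorm F 2 X)) := by
    unfold vecLpNorm; positivity
  refine (vecLpNorm_le_of_forall_le hB fun f =>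
    (l2Norm_gnnLayer_sub_le hWm hWtm hWb hWtb hρ hhl hbar0 hX hXt f).trans ?_).trans_eq ?_
  · gcongr
    · exact sum_l2Norm_le (fun g u => Xt g u - X g u)
    · exact sum_l2Norm_le X
  · linear_combination (K * hbar * (vecLpNorm F 2 (fun f u => Xt f u - X f u)
      + K * Δ * vecLpNorm F 2 X)) * Real.mul_self_sqrt (Nat.cast_nonneg (α := ℝ) F)

lemma vecLpNorm_gnnLayer_le (hWm : Measurable (Function.uncurry W))
    (hWb : ∀ᵐ q ∂μI2, |Function.uncurry W q| ≤ 1) (hρ : NormalizedLipschitz ρ)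
    (hhl : ∀ f g k, |hl f g k| ≤ hbar) (hbar0 : 0 ≤ hbar) {X : Fin F → ℝ → ℝ}
    (hX : ∀ g, MemLp (X g) 2 μI) :
    vecLpNorm F 2 (gnnLayer F K W ρ hl X) ≤ F * K * hbar * vecLpNorm F 2 X := by
  simpa [gnnLayer_zero_right hρ, vecLpNorm_zero] using
    vecLpNorm_gnnLayer_sub_le hWm hWm hWb hWb hρ hhl hbar0 (X := 0) (fun _ => MemLp.zero) hX

end Layer

lemma foldl_perturbation_le {α ι : Type*} (P : α → Prop) (N : α → ℝ) (D : α → α → ℝ)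
    (φ ψ : ι → α → α) (l : List ι) {C a : ℝ} (hC : 0 ≤ C) (ha : 0 ≤ a)
    (hφ : ∀ i ∈ l, ∀ x, P x → P (φ i x)) (hψ : ∀ i ∈ l, ∀ x, P x → P (ψ i x))
    (hN : ∀ i ∈ l, ∀ x, P x → N (φ i x) ≤ C * N x)
    (hD : ∀ i ∈ l, ∀ x y, P x → P y → D (ψ i y) (φ i x) ≤ C * (D y x + a * N x))
    {x y : α} (hx : P x) (hy : P y) :
    D (l.foldl (fun z i => ψ i z) y) (l.foldl (fun z i => φ i z) x)
      ≤ C ^ l.length * (D y x + l.length * a * N x) := by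
  induction l generalizing x y with
  | nil => simp
  | cons i l ih =>
    simp only [List.mem_cons, forall_eq_or_imp] at hφ hψ hN hD
    calc _ ≤ C ^ l.length * (D (ψ i y) (φ i x) + l.length * a * N (φ i x)) :=
          ih hφ.2 hψ.2 hN.2 hD.2 (hφ.1 x hx) (hψ.1 y hy)
      _ ≤ C ^ l.length * (C * (D y x + a * N x) + l.length * a * (C * N x)) := by
          gcongr
          exacts [hD.1 x y hx hy, hN.1 x hx]
      _ = _ := by simp only [List.length_cons]; push_cast; ring

/-- **Stability of graphon neural networks.**
For a normalized Lipschitz activation, kernels `W, W̃` with `|W| ≤ 1`, `|W̃| ≤ 1` a.e., and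
filters bounded by `h̄`, the `L`-layer graphon neural network satisfies
`‖Φ(W̃;X̃;h) − Φ(W;X;h)‖_{L²} ≤ (F K h̄)^L (‖X̃ − X‖_{L²} + L K ‖T_{W̃} − T_W‖_{L²→L²} ‖X‖_{L²})`. -/
theorem gnn_stability
    (F K L : ℕ) (hF : 1 ≤ F) (hK : 1 ≤ K) (hL : 1 ≤ L)
    (ρ : ℝ → ℝ) (hρ : NormalizedLipschitz ρ)
    (W Wt : ℝ → ℝ → ℝ)
    (hWm : Measurable (Function.uncurry W)) (hWtm : Measurable (Function.uncurry Wt))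
    (hWb : ∀ᵐ q ∂μI2, |Function.uncurry W q| ≤ 1)
    (hWtb : ∀ᵐ q ∂μI2, |Function.uncurry Wt q| ≤ 1)
    (h : Fin L → Fin F → Fin F → Fin K → ℝ) (hbar : ℝ)
    (hh : ∀ ℓ f g k, |h ℓ f g k| ≤ hbar)
    (X Xt : Fin F → ℝ → ℝ)
    (hX : ∀ f, MemLp (X f) ⊤ μI) (hXt : ∀ f, MemLp (Xt f) ⊤ μI) :
    vecLpNorm F 2 (fun f u => gnn F K L Wt ρ h Xt f u - gnn F K L W ρ h X f u)
      ≤ ((F : ℝ) * K * hbar) ^ L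
          * (vecLpNorm F 2 (fun f u => Xt f u - X f u)
            + (L : ℝ) * K * graphonOpNormSub Wt W * vecLpNorm F 2 X) := by
  have hbar0 : 0 ≤ hbar := (abs_nonneg _).trans (hh ⟨0, hL⟩ ⟨0, hF⟩ ⟨0, hF⟩ ⟨0, hK⟩)
  have hlayers : ∀ hl ∈ List.ofFn h, ∀ f g k, |hl f g k| ≤ hbar := by
    intro hl hl_mem
    obtain ⟨ℓ, rfl⟩ := List.mem_ofFn.1 hl_mem
    exact hh ℓ
  have hK0 : (0 : ℝ) ≤ K * graphonOpNormSub Wt W :=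
    mul_nonneg K.cast_nonneg (graphonOpNormSub_nonneg Wt W)
  simpa only [gnn, List.length_ofFn, mul_assoc] using
    foldl_perturbation_le (fun Y => ∀ f, MemLp (Y f) 2 μI) (vecLpNorm F 2)
    (fun Y Z => vecLpNorm F 2 (fun f u => Y f u - Z f u)) (gnnLayer F K W ρ) (gnnLayer F K Wt ρ)
    (List.ofFn h) (by positivity) hK0
    (fun _ _ _ hY => memLp_gnnLayer hWm hWb hρ one_le_two hY)
    (fun _ _ _ hY => memLp_gnnLayer hWtm hWtb hρ one_le_two hY)
    (fun hl hl_mem _ hY => vecLpNorm_gnnLayer_le hWm hWb hρ (hlayers hl hl_mem) hbar0 hY)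
    (fun hl hl_mem _ _ hY hYt =>
      vecLpNorm_gnnLayer_sub_le hWm hWtm hWb hWtb hρ (hlayers hl hl_mem) hbar0 hY hYt)
    (fun f => (hX f).mono_exponent le_top) (fun f => (hXt f).mono_exponent le_top)
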